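/- Let G be a pro-2-group generated by involutions. Then the map H^1(G, Z/2Z) → H^1(G, Q_2/Z_2) induced by the inclusion Z/2Z ⊂ Q_2/Z_2 is an isomorphism. -/

import Mathlib

/-! Statement 3: for a pro-2-group G generated by involutions, the map
H¹(G,ℤ/2ℤ) → H¹(G,ℚ₂/ℤ₂) induced by the inclusion ℤ/2ℤ ⊂ ℚ₂/ℤ₂ is an isomorphism. -/

namespace GCoh

variable {G : Type*} [Group G] [TopologicalSpace G]
variable {A : Type*} [AddCommGroup A] [TopologicalSpace A]

/-- Inhomogeneous differential for continuous cochains, trivial action. -/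
def d (n : ℕ) (f : (Fin n → G) → A) : (Fin (n+1) → G) → A :=
  fun g =>
    f (fun i => g i.succ)
      + ∑ i : Fin n, ((-1 : ℤ) ^ ((i : ℕ) + 1)) •
          f (fun j => if (j : ℕ) < (i : ℕ) then g j.castSucc
                      else if (j : ℕ) = (i : ℕ) then g i.castSucc * g i.succ
                      else g j.succ)
      + ((-1 : ℤ) ^ (n + 1)) • f (fun i => g i.castSucc)

/-- A continuous `n`-cocycle (trivial action). -/
def IsCocycle (n : ℕ) (f : (Fin n → G) → A) : Prop :=
  Continuous f ∧ d n f = 0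

/-- A continuous `n`-coboundary (trivial action). -/
def IsCoboundary : (n : ℕ) → ((Fin n → G) → A) → Prop
  | 0, f => f = 0
  | (n+1), f => ∃ h : (Fin n → G) → A, Continuous h ∧ d n h = f

/-- Pullback of cochains along a homomorphism. -/
def pull {G' : Type*} [Group G'] (φ : G' →* G) (n : ℕ) (f : (Fin n → G) → A) :
    (Fin n → G') → A :=
  fun v => f (fun i => φ (v i))

/-- A pro-`p` group: a profinite group all of whose finite quotients are `p`-groups. -/
def IsProP (p : ℕ) (G : Type*) [Group G] [TopologicalSpace G] : Prop :=
  CompactSpace G ∧ T2Space G ∧ TotallyDisconnectedSpace G ∧ IsTopologicalGroup G ∧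
    ∀ U : Subgroup G, U.Normal → IsOpen (U : Set G) → ∃ n : ℕ, Nat.card (G ⧸ U) = p ^ n

/-- `G` is topologically generated by its involutions. -/
def GeneratedByInvolutions (G : Type*) [Group G] [TopologicalSpace G] : Prop :=
  closure ((Subgroup.closure {g : G | g ^ 2 = 1} : Subgroup G) : Set G) = Set.univ

end GCoh

open GCoh

/-- The discrete module `ℚ₂/ℤ₂`. -/
noncomputable abbrev Q2Z2 := ℚ_[2] ⧸ (PadicInt.Coe.ringHom (p := 2)).toAddMonoidHom.range

/-- The class of `1/2`, a generator of the `2`-torsion of `ℚ₂/ℤ₂`. -/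
noncomputable def halfClass : Q2Z2 := QuotientAddGroup.mk ((2 : ℚ_[2])⁻¹)

/-- The inclusion `ℤ/2ℤ ↪ ℚ₂/ℤ₂` onto the 2-torsion subgroup. -/
noncomputable def iota : ZMod 2 →+ Q2Z2 :=
  ZMod.lift 2 ⟨(zmultiplesHom Q2Z2) halfClass, by
    show (2 : ℤ) • halfClass = 0
    rw [halfClass, ← QuotientAddGroup.mk_zsmul, QuotientAddGroup.eq_zero_iff]
    refine ⟨(1 : ℤ_[2]), ?_⟩
    show ((1 : ℤ_[2]) : ℚ_[2]) = (2 : ℤ) • ((2 : ℚ_[2])⁻¹)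
    rw [zsmul_eq_mul]; push_cast; norm_num⟩

/-!
A continuous 1-cocycle with trivial coefficients is a continuous homomorphism. Twice such a
homomorphism `G → ℚ₂/ℤ₂` kills every involution, and its kernel is closed because `ℚ₂/ℤ₂` is
discrete, so it kills all of `G`. Hence every 1-cocycle takes its values in the 2-torsion
`{0, 1/2}`, which is the image of the injective map `ι : ℤ/2ℤ → ℚ₂/ℤ₂`. As the only 1-coboundary
is zero, this makes `H¹(G, ℤ/2ℤ) → H¹(G, ℚ₂/ℤ₂)` bijective.
-/

namespace GCoh

variable {G : Type*} [Group G] {A : Type*} [AddCommGroup A]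

theorem d_zero (h : (Fin 0 → G) → A) : d 0 h = 0 := by
  funext g
  simp [d, Subsingleton.elim (fun i : Fin 0 => g i.succ) (fun i => g i.castSucc)]

theorem apply_eq_apply_zero {α β : Type*} (f : (Fin 1 → α) → β) (v : Fin 1 → α) :
    f v = f (fun _ => v 0) := by
  congr 1
  funext i
  fin_cases i
  rfl

theorem d_one_apply (f : (Fin 1 → G) → A) (a b : G) :
    d 1 f ![a, b] = f (fun _ => b) - f (fun _ => a * b) + f (fun _ => a) := by
  simp only [d, Fin.sum_univ_one]
  rw [apply_eq_apply_zero f, apply_eq_apply_zero f (fun i => ![a, b] i.castSucc)]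
  simp [sub_eq_add_neg]

theorem d_one_eq_zero_iff (f : (Fin 1 → G) → A) :
    d 1 f = 0 ↔ ∀ a b : G, f (fun _ => a * b) = f (fun _ => a) + f (fun _ => b) := by
  refine ⟨fun h a b => ?_, fun h => funext fun g => ?_⟩
  · have hab := congrFun h ![a, b]
    rw [d_one_apply, Pi.zero_apply] at hab
    rw [← sub_eq_zero, ← neg_eq_zero, ← hab]
    abel
  · have hg : g = ![g 0, g 1] := by
      funext i
      fin_cases i <;> rfl
    rw [hg, d_one_apply, h, Pi.zero_apply]
    abel

def oneCocycleHom {f : (Fin 1 → G) → A} (hf : d 1 f = 0) : G →* Multiplicative A :=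
  MonoidHom.mk' (fun g => Multiplicative.ofAdd (f fun _ => g)) ((d_one_eq_zero_iff f).1 hf)

variable [TopologicalSpace G]

theorem isCoboundary_one_iff [TopologicalSpace A] (f : (Fin 1 → G) → A) :
    IsCoboundary 1 f ↔ f = 0 := by
  constructor
  · rintro ⟨h, -, rfl⟩
    exact d_zero h
  · rintro rfl
    exact ⟨0, continuous_const, d_zero 0⟩

theorem GeneratedByInvolutions.eq_top_of_isClosed (hG : GeneratedByInvolutions G)
    {K : Subgroup G} (hK : IsClosed (K : Set G)) (hinv : ∀ g : G, g ^ 2 = 1 → g ∈ K) :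
    K = ⊤ := by
  have hcl := hK.closure_subset_iff.2 ((Subgroup.closure_le (k := {g : G | g ^ 2 = 1}) K).2 hinv)
  rw [hG, Set.univ_subset_iff] at hcl
  exact SetLike.coe_injective (hcl.trans Subgroup.coe_top.symm)

theorem IsCocycle.two_nsmul_eq_zero [TopologicalSpace A] [ContinuousAdd A] [T1Space A]
    (hG : GeneratedByInvolutions G) {f : (Fin 1 → G) → A} (hf : IsCocycle 1 f)
    (v : Fin 1 → G) : 2 • f v = 0 := by
  set φ := oneCocycleHom hf.2
  have hker : (φ ^ 2).ker = ⊤ := by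
    refine hG.eq_top_of_isClosed ?_ fun g hg => ?_
    · have hset : ((φ ^ 2).ker : Set G) = (fun g => 2 • f fun _ => g) ⁻¹' {0} := rfl
      rw [hset]
      exact isClosed_singleton.preimage
        ((hf.1.comp (continuous_pi fun _ => continuous_id)).nsmul 2)
    · rw [MonoidHom.mem_ker, MonoidHom.pow_apply, ← map_pow, hg, map_one]
  rw [apply_eq_apply_zero f]
  exact (φ ^ 2).mem_ker.1 (hker ▸ Subgroup.mem_top (v 0))

theorem IsCocycle.exists_comp_eq_of_mem_range [TopologicalSpace A] [DiscreteTopology A]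
    {B : Type*} [AddCommGroup B] [TopologicalSpace B] {ι : B →+ A} (hι : Function.Injective ι)
    {f : (Fin 1 → G) → A} (hf : IsCocycle 1 f) (hrange : ∀ v, f v ∈ Set.range ι) :
    ∃ g : (Fin 1 → G) → B, IsCocycle 1 g ∧ (fun v => ι (g v)) = f := by
  have hsec : ∀ v, ι (Function.invFun ι (f v)) = f v := fun v => Function.invFun_eq (hrange v)
  have hcont : Continuous (Function.invFun ι) := continuous_of_discreteTopology
  refine ⟨fun v => Function.invFun ι (f v),
    ⟨hcont.comp hf.1, (d_one_eq_zero_iff _).2 fun a b => hι ?_⟩, funext hsec⟩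
  simp only [map_add, hsec]
  exact (d_one_eq_zero_iff f).1 hf.2 a b

end GCoh

theorem PadicInt.mem_range_coe_iff {p : ℕ} [Fact p.Prime] {x : ℚ_[p]} :
    x ∈ (PadicInt.Coe.ringHom (p := p)).toAddMonoidHom.range ↔ ‖x‖ ≤ 1 :=
  ⟨fun ⟨z, hz⟩ => hz ▸ PadicInt.norm_le_one z, fun hx => ⟨⟨x, hx⟩, rfl⟩⟩

instance : DiscreteTopology Q2Z2 := by
  refine QuotientAddGroup.discreteTopology ?_
  convert IsUltrametricDist.isOpen_closedBall (0 : ℚ_[2]) one_ne_zero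
  exact Set.ext fun _ => PadicInt.mem_range_coe_iff.trans mem_closedBall_zero_iff.symm

theorem halfClass_ne_zero : halfClass ≠ 0 := by
  have h2 : ‖(2 : ℚ_[2])‖ = 2⁻¹ := by exact_mod_cast Padic.norm_p (p := 2)
  rw [halfClass, Ne, QuotientAddGroup.eq_zero_iff, PadicInt.mem_range_coe_iff, norm_inv, h2]
  norm_num

theorem iota_intCast (n : ℤ) : iota n = n • halfClass :=
  ZMod.lift_coe _ _ n

theorem iota_one : iota 1 = halfClass := by
  simpa using iota_intCast 1

theorem iota_natCast (n : ℕ) : iota n = n • halfClass := by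
  rw [← nsmul_one, map_nsmul, iota_one]

theorem iota_injective : Function.Injective iota := by
  refine (injective_iff_map_eq_zero iota).2 fun x hx => ?_
  fin_cases x
  · rfl
  · exact absurd (iota_one.symm.trans hx) halfClass_ne_zero

/- If `2y = z ∈ ℤ₂` and `z = n + 2w` with `n : ℕ`, `w ∈ ℤ₂`, then `y ≡ n/2` modulo `ℤ₂`. -/
theorem mem_range_iota_of_two_nsmul_eq_zero {x : Q2Z2} (hx : 2 • x = 0) :
    x ∈ Set.range iota := by
  obtain ⟨y, rfl⟩ := QuotientAddGroup.mk_surjective x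
  rw [← QuotientAddGroup.mk_nsmul, QuotientAddGroup.eq_zero_iff] at hx
  obtain ⟨z, hz⟩ := hx
  change (z : ℚ_[2]) = 2 • y at hz
  obtain ⟨w, hw⟩ := Ideal.mem_span_singleton'.1 (z.appr_spec 1)
  have hw' := congrArg ((↑) : ℤ_[2] → ℚ_[2]) hw
  refine ⟨z.appr 1, ?_⟩
  rw [iota_natCast, halfClass, ← QuotientAddGroup.mk_nsmul, QuotientAddGroup.eq]
  refine ⟨w, ?_⟩
  change (w : ℚ_[2]) = -(z.appr 1 • (2 : ℚ_[2])⁻¹) + y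
  rw [nsmul_eq_mul] at hz ⊢
  have h2 : ((2 : ℤ_[2]) : ℚ_[2]) = 2 := by norm_cast
  push_cast [h2] at hz hw'
  linear_combination hw' / 2 + hz / 2

theorem h1_two_torsion_iso_of_involutions_general
    (G : Type) [Group G] [TopologicalSpace G]
    (hGinv : GeneratedByInvolutions G) :
    -- injectivity of H¹(G,ℤ/2ℤ) → H¹(G,ℚ₂/ℤ₂)
    (∀ f : (Fin 1 → G) → ZMod 2, IsCocycle 1 f →
        IsCoboundary 1 (fun v => iota (f v)) → IsCoboundary 1 f) ∧
    -- surjectivity of H¹(G,ℤ/2ℤ) → H¹(G,ℚ₂/ℤ₂)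
    (∀ f' : (Fin 1 → G) → Q2Z2, IsCocycle 1 f' →
        ∃ f : (Fin 1 → G) → ZMod 2, IsCocycle 1 f ∧
          IsCoboundary 1 (f' - fun v => iota (f v))) := by
  refine ⟨fun f _ hcb => ?_, fun f' hf' => ?_⟩
  · rw [isCoboundary_one_iff] at hcb ⊢
    exact funext fun v => iota_injective ((congrFun hcb v).trans (map_zero iota).symm)
  · obtain ⟨f, hf, hcomp⟩ := hf'.exists_comp_eq_of_mem_range iota_injective
      fun v => mem_range_iota_of_two_nsmul_eq_zero (hf'.two_nsmul_eq_zero hGinv v)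
    exact ⟨f, hf, (isCoboundary_one_iff _).2 (by rw [hcomp, sub_self])⟩

theorem h1_two_torsion_iso_of_involutions
    (G : Type) [Group G] [TopologicalSpace G]
    (hG : IsProP 2 G) (hGinv : GeneratedByInvolutions G) :
    -- injectivity of H¹(G,ℤ/2ℤ) → H¹(G,ℚ₂/ℤ₂)
    (∀ f : (Fin 1 → G) → ZMod 2, IsCocycle 1 f →
        IsCoboundary 1 (fun v => iota (f v)) → IsCoboundary 1 f) ∧
    -- surjectivity of H¹(G,ℤ/2ℤ) → H¹(G,ℚ₂/ℤ₂)
    (∀ f' : (Fin 1 → G) → Q2Z2, IsCocycle 1 f' →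
        ∃ f : (Fin 1 → G) → ZMod 2, IsCocycle 1 f ∧
          IsCoboundary 1 (f' - fun v => iota (f v))) :=
  h1_two_torsion_iso_of_involutions_general G hGinv
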